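/- (Trace-type estimate between two graphs; estimate (s1) in the proof of Lemma 1, single-rectangle form.) Under the stated assumptions, ∫₀^T ψ(t, g(t))² dt ≤ 2 ∫₀^T ψ(t, G(t))² dt + 2γ ∫_S ‖∇ψ(x)‖² dx. -/

import Mathlib

open MeasureTheory Set

/-- A point of the Euclidean plane given by its two coordinates. -/
noncomputable def pt2 (a b : ℝ) : EuclideanSpace ℝ (Fin 2) :=
  (WithLp.equiv 2 (Fin 2 → ℝ)).symm ![a, b]

lemma pt2_decomp (t s : ℝ) : pt2 t s = t • pt2 1 0 + s • pt2 0 1 := by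
  ext i; fin_cases i <;> simp [pt2]

lemma pt2_apply_zero (a b : ℝ) : (pt2 a b) 0 = a := by simp [pt2]

lemma pt2_apply_one (a b : ℝ) : (pt2 a b) 1 = b := by simp [pt2]

lemma norm_pt2_zero_one : ‖pt2 0 1‖ = 1 := by
  simp [pt2, EuclideanSpace.norm_eq, Fin.sum_univ_two]

/-- Cauchy–Schwarz for interval integrals of continuous functions. -/
lemma sq_intervalIntegral_le (f : ℝ → ℝ) (hf : Continuous f) {a b : ℝ} (hab : a ≤ b) :
    (∫ s in a..b, f s) ^ 2 ≤ (b - a) * ∫ s in a..b, f s ^ 2 := by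
  rcases eq_or_lt_of_le hab with rfl | hlt
  · simp
  set μ := volume.restrict (Set.Ioc a b) with hμdef
  have hμ : (μ Set.univ).toReal = b - a := by
    simp [hμdef, Real.volume_Ioc, ENNReal.toReal_ofReal (by linarith : (0:ℝ) ≤ b - a)]
  have hf1 : Integrable f μ := hf.integrableOn_Ioc
  have hf2 : Integrable (fun s => f s ^ 2) μ := (hf.pow 2).integrableOn_Ioc
  rw [intervalIntegral.integral_of_le hab, intervalIntegral.integral_of_le hab]
  set A := ∫ s, f s ∂μ with hA
  set V := b - a with hV
  have key : 0 ≤ ∫ s, (V * f s - A) ^ 2 ∂μ := integral_nonneg fun s => sq_nonneg _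
  have expand : ∫ s, (V * f s - A) ^ 2 ∂μ
      = V ^ 2 * (∫ s, f s ^ 2 ∂μ) - 2 * V * A * A + A ^ 2 * V := by
    have h1 : ∀ s, (V * f s - A) ^ 2 = V ^ 2 * f s ^ 2 - 2 * V * A * f s + A ^ 2 := by
      intro s; ring
    simp_rw [h1]
    have hsub : Integrable (fun s => V ^ 2 * f s ^ 2 - 2 * V * A * f s) μ := by
      exact ((hf2.const_mul _)).sub (hf1.const_mul _)
    have hconst : Integrable (fun _ : ℝ => A ^ 2) μ := integrable_const _
    rw [integral_add hsub hconst,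
      integral_sub (hf2.const_mul _) (hf1.const_mul _),
      integral_const_mul, integral_const_mul, integral_const, smul_eq_mul, measureReal_def, hμ]
    ring
  nlinarith [key, expand, sub_pos.2 hlt]

/-- Trace-type estimate between two graphs (estimate (s1) in the proof of Lemma 1,
single-rectangle form). -/
theorem trace_type_estimate_between_graphs
    (γ T : ℝ) (hγ : 0 < γ) (hT : 0 < T)
    (g G : ℝ → ℝ)
    (hg : ContinuousOn g (Icc 0 T)) (hG : ContinuousOn G (Icc 0 T))
    (hgG : ∀ t ∈ Icc (0:ℝ) T, g t ≤ G t ∧ G t ≤ g t + γ)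
    (S : Set (EuclideanSpace ℝ (Fin 2)))
    (hS : S = {x : EuclideanSpace ℝ (Fin 2) |
        x 0 ∈ Ioo (0:ℝ) T ∧ x 1 ∈ Ioo (g (x 0)) (G (x 0))})
    (ψ : EuclideanSpace ℝ (Fin 2) → ℝ) (hψ : ContDiff ℝ 1 ψ) :
    (∫ t in (0:ℝ)..T, (ψ (pt2 t (g t)))^2)
      ≤ 2 * (∫ t in (0:ℝ)..T, (ψ (pt2 t (G t)))^2)
        + 2 * γ * ∫ x in S, ‖gradient ψ x‖^2 := by
  have hγ0 : (0:ℝ) ≤ γ := hγ.le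
  set e0 : EuclideanSpace ℝ (Fin 2) := pt2 1 0 with he0
  set e1 : EuclideanSpace ℝ (Fin 2) := pt2 0 1 with he1
  have hpt : ∀ t s : ℝ, pt2 t s = t • e0 + s • e1 := pt2_decomp
  have hψc : Continuous ψ := hψ.continuous
  have hψd : Differentiable ℝ ψ := hψ.differentiable one_ne_zero
  have hfderiv : Continuous (fderiv ℝ ψ) := hψ.continuous_fderiv one_ne_zero
  have hgradc : Continuous (gradient ψ) := by
    have : gradient ψ = fun x => (InnerProductSpace.toDual ℝ _).symm (fderiv ℝ ψ x) := rfl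
    rw [this]; exact (LinearIsometryEquiv.continuous _).comp hfderiv
  set h : EuclideanSpace ℝ (Fin 2) → ℝ := fun x => ‖gradient ψ x‖ ^ 2 with hh
  have hhc : Continuous h := (hgradc.norm).pow 2
  -- the continuous map (t, s) ↦ pt2 t s
  have hptc : Continuous (fun p : ℝ × ℝ => pt2 p.1 p.2) := by
    simp only [hpt]; fun_prop
  set D : ℝ → ℝ → ℝ := fun t s => fderiv ℝ ψ (pt2 t s) e1 with hD
  have hDc : Continuous fun p : ℝ × ℝ => D p.1 p.2 := by
    exact (hfderiv.comp hptc).clm_apply continuous_const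
  have hDle : ∀ t s, |D t s| ≤ ‖gradient ψ (pt2 t s)‖ := by
    intro t s
    have hfg : fderiv ℝ ψ (pt2 t s) e1 = inner ℝ (gradient ψ (pt2 t s)) e1 := by
      rw [gradient, InnerProductSpace.toDual_symm_apply]
    show |fderiv ℝ ψ (pt2 t s) e1| ≤ ‖gradient ψ (pt2 t s)‖
    rw [hfg]
    calc |(inner ℝ (gradient ψ (pt2 t s)) e1 : ℝ)|
        ≤ ‖gradient ψ (pt2 t s)‖ * ‖e1‖ := abs_real_inner_le_norm _ _
      _ = ‖gradient ψ (pt2 t s)‖ := by rw [he1, norm_pt2_zero_one, mul_one]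
  have hderiv : ∀ t s, HasDerivAt (fun s => ψ (pt2 t s)) (D t s) s := by
    intro t s
    have hl : HasDerivAt (fun s : ℝ => t • e0 + s • e1) e1 s := by
      simpa using ((hasDerivAt_id s).smul_const e1).const_add (t • e0)
    have hcomp : HasDerivAt (fun s => ψ (t • e0 + s • e1))
        (fderiv ℝ ψ (t • e0 + s • e1) e1) s :=
      (hψd (t • e0 + s • e1)).hasFDerivAt.comp_hasDerivAt s hl
    show HasDerivAt (fun s => ψ (pt2 t s)) (fderiv ℝ ψ (pt2 t s) e1) s
    simpa only [← hpt] using hcomp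
  set I : ℝ → ℝ := fun t => ∫ s in (g t)..(G t), h (pt2 t s) with hI
  -- pointwise estimate
  have hpoint : ∀ t ∈ Icc (0:ℝ) T,
      (ψ (pt2 t (g t)))^2 ≤ 2 * (ψ (pt2 t (G t)))^2 + 2 * γ * I t := by
    intro t ht
    obtain ⟨h1, h2⟩ := hgG t ht
    have hDct : Continuous (D t) := hDc.comp (Continuous.prodMk_right t)
    have hftc : ∫ s in (g t)..(G t), D t s = ψ (pt2 t (G t)) - ψ (pt2 t (g t)) :=
      intervalIntegral.integral_eq_sub_of_hasDerivAt (fun s _ => hderiv t s)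
        (hDct.intervalIntegrable _ _)
    have hCS : (∫ s in (g t)..(G t), D t s) ^ 2
        ≤ (G t - g t) * ∫ s in (g t)..(G t), (D t s) ^ 2 :=
      sq_intervalIntegral_le (D t) hDct h1
    have hmono : ∫ s in (g t)..(G t), (D t s) ^ 2 ≤ I t := by
      refine intervalIntegral.integral_mono_on h1 ((hDct.pow 2).intervalIntegrable _ _)
        (((hhc.comp (hptc.comp (Continuous.prodMk_right t))).intervalIntegrable _ _)) ?_
      intro s _
      have := hDle t s
      calc (D t s) ^ 2 = |D t s| ^ 2 := (sq_abs _).symm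
        _ ≤ ‖gradient ψ (pt2 t s)‖ ^ 2 := by
            exact pow_le_pow_left₀ (abs_nonneg _) this 2
        _ = h (pt2 t s) := rfl
    have hIDnn : 0 ≤ ∫ s in (g t)..(G t), (D t s) ^ 2 :=
      intervalIntegral.integral_nonneg h1 fun u _ => sq_nonneg _
    have hdiff : (ψ (pt2 t (G t)) - ψ (pt2 t (g t))) ^ 2 ≤ γ * I t := by
      calc (ψ (pt2 t (G t)) - ψ (pt2 t (g t))) ^ 2
          = (∫ s in (g t)..(G t), D t s) ^ 2 := by rw [hftc]
        _ ≤ (G t - g t) * ∫ s in (g t)..(G t), (D t s) ^ 2 := hCS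
        _ ≤ γ * ∫ s in (g t)..(G t), (D t s) ^ 2 :=
            mul_le_mul_of_nonneg_right (by linarith) hIDnn
        _ ≤ γ * I t := mul_le_mul_of_nonneg_left hmono hγ0
    nlinarith [hdiff, sq_nonneg (2 * ψ (pt2 t (G t)) - ψ (pt2 t (g t)))]
  -- the product-space picture
  set f : ℝ × ℝ → EuclideanSpace ℝ (Fin 2) := fun p => pt2 p.1 p.2 with hf
  have hfm : MeasurePreserving f volume volume := by
    have h1 := (EuclideanSpace.volume_preserving_symm_measurableEquiv_toLp (Fin 2)).symm
    have h2 := (volume_preserving_finTwoArrow ℝ).symm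
    have h3 := h1.comp h2
    have hfeq : f = ⇑(MeasurableEquiv.toLp 2 (Fin 2 → ℝ)) ∘
        ⇑(MeasurableEquiv.finTwoArrow (α := ℝ)).symm := by
      funext p
      show pt2 p.1 p.2 = (MeasurableEquiv.toLp 2 (Fin 2 → ℝ))
        ((MeasurableEquiv.finTwoArrow).symm p)
      rw [MeasurableEquiv.coe_toLp]
      unfold pt2
      congr 1
    rw [hfeq]
    exact h3
  have hfe : MeasurableEmbedding f := by
    have : f = ⇑((MeasurableEquiv.finTwoArrow (α := ℝ)).symm.trans
        (MeasurableEquiv.toLp 2 (Fin 2 → ℝ))) := by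
      funext p
      show pt2 p.1 p.2 = (MeasurableEquiv.toLp 2 (Fin 2 → ℝ))
        ((MeasurableEquiv.finTwoArrow).symm p)
      rw [MeasurableEquiv.coe_toLp]
      unfold pt2
      congr 1
    rw [this]
    exact MeasurableEquiv.measurableEmbedding _
  -- the region between the graphs in ℝ × ℝ
  set S' : Set (ℝ × ℝ) := {p : ℝ × ℝ | p.1 ∈ Ioo (0:ℝ) T ∧ p.2 ∈ Ioo (g p.1) (G p.1)} with hS'
  have hpre : f ⁻¹' S = S' := by
    rw [hS]; ext p
    simp [hf, hS', pt2_apply_zero, pt2_apply_one]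
  -- measurability of S' via globally-continuous modifications of g and G
  set g' : ℝ → ℝ := fun t => g (min (max t 0) T) with hg'
  set G' : ℝ → ℝ := fun t => G (min (max t 0) T) with hG'
  have hproj : ∀ t, min (max t 0) T ∈ Icc (0:ℝ) T := by
    intro t
    exact ⟨le_min (le_max_right t 0) hT.le, min_le_right _ _⟩
  have hprojeq : ∀ t ∈ Icc (0:ℝ) T, min (max t 0) T = t := by
    intro t ht
    rw [max_eq_left ht.1, min_eq_left ht.2]
  have hg'c : Continuous g' :=
    hg.comp_continuous (by fun_prop) hproj
  have hG'c : Continuous G' :=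
    hG.comp_continuous (by fun_prop) hproj
  have hg'eq : ∀ t ∈ Icc (0:ℝ) T, g' t = g t := fun t ht => by
    show g (min (max t 0) T) = g t
    rw [hprojeq t ht]
  have hG'eq : ∀ t ∈ Icc (0:ℝ) T, G' t = G t := fun t ht => by
    show G (min (max t 0) T) = G t
    rw [hprojeq t ht]
  have hS'region : S' = regionBetween g' G' (Ioo 0 T) := by
    ext p
    simp only [hS', regionBetween, mem_setOf_eq]
    constructor
    · rintro ⟨hp1, hp2⟩
      refine ⟨hp1, ?_⟩
      rwa [hg'eq _ (Ioo_subset_Icc_self hp1), hG'eq _ (Ioo_subset_Icc_self hp1)]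
    · rintro ⟨hp1, hp2⟩
      refine ⟨hp1, ?_⟩
      rwa [hg'eq _ (Ioo_subset_Icc_self hp1), hG'eq _ (Ioo_subset_Icc_self hp1)] at hp2
  have hS'm : MeasurableSet S' := by
    rw [hS'region]
    exact measurableSet_regionBetween hg'c.measurable hG'c.measurable measurableSet_Ioo
  -- bounds for the second coordinate on S'
  obtain ⟨c₁, hc₁⟩ : ∃ c, ∀ t ∈ Icc (0:ℝ) T, c ≤ g t := by
    obtain ⟨c, hc⟩ := (isCompact_Icc.image_of_continuousOn hg).bddBelow
    exact ⟨c, fun t ht => hc ⟨t, ht, rfl⟩⟩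
  obtain ⟨c₂, hc₂⟩ : ∃ c, ∀ t ∈ Icc (0:ℝ) T, G t ≤ c := by
    obtain ⟨c, hc⟩ := (isCompact_Icc.image_of_continuousOn hG).bddAbove
    exact ⟨c, fun t ht => hc ⟨t, ht, rfl⟩⟩
  have hS'sub : S' ⊆ Icc (0:ℝ) T ×ˢ Icc c₁ c₂ := by
    rintro p ⟨hp1, hp2⟩
    have ht : p.1 ∈ Icc (0:ℝ) T := Ioo_subset_Icc_self hp1
    exact ⟨ht, ⟨(hc₁ _ ht).trans hp2.1.le, hp2.2.le.trans (hc₂ _ ht)⟩⟩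
  -- the indicator function and its integrability
  set F : ℝ × ℝ → ℝ := S'.indicator (fun p => h (f p)) with hF
  have hFint : Integrable F := by
    rw [hF, integrable_indicator_iff hS'm]
    refine IntegrableOn.mono_set ?_ hS'sub
    exact (hhc.comp (hptc)).continuousOn.integrableOn_compact
      (isCompact_Icc.prod isCompact_Icc)
  -- the set-integral over S equals the integral of F
  have hstep1 : ∫ x in S, h x = ∫ p, F p := by
    rw [← hfm.setIntegral_preimage_emb hfe h S, hpre, hF, integral_indicator hS'm]
  -- Fubini
  have hvol : (volume : Measure (ℝ × ℝ)) = (volume : Measure ℝ).prod volume := rfl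
  have hstep2 : ∫ p, F p = ∫ t, ∫ s, F (t, s) := by
    rw [hvol] at hFint ⊢
    exact integral_prod F hFint
  -- the inner integral
  set I' : ℝ → ℝ := fun t => ∫ s in Ioo (g t) (G t), h (pt2 t s) with hI'
  have hinner : (fun t => ∫ s, F (t, s)) = (Ioo (0:ℝ) T).indicator I' := by
    funext t
    by_cases ht : t ∈ Ioo (0:ℝ) T
    · have : (fun s => F (t, s)) = (Ioo (g t) (G t)).indicator (fun s => h (pt2 t s)) := by
        funext s
        by_cases hs : s ∈ Ioo (g t) (G t)
        · rw [hF, indicator_of_mem (by exact ⟨ht, hs⟩ : (t, s) ∈ S'), indicator_of_mem hs]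
        · rw [hF, indicator_of_notMem (fun hmem => hs hmem.2), indicator_of_notMem hs]
      rw [this, integral_indicator measurableSet_Ioo, indicator_of_mem ht]
    · have : (fun s => F (t, s)) = fun _ => 0 := by
        funext s
        rw [hF, indicator_of_notMem (fun hmem => ht hmem.1)]
      rw [this, indicator_of_notMem ht]
      simp
  have hII' : ∀ t ∈ Ioo (0:ℝ) T, I' t = I t := by
    intro t ht
    have h1 := (hgG t (Ioo_subset_Icc_self ht)).1
    simp only [hI, hI']
    rw [intervalIntegral.integral_of_le h1, integral_Ioc_eq_integral_Ioo]
  have hstep3 : ∫ t, ∫ s, F (t, s) = ∫ t in (0:ℝ)..T, I t := by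
    rw [hinner, integral_indicator measurableSet_Ioo,
      setIntegral_congr_fun measurableSet_Ioo hII',
      intervalIntegral.integral_of_le hT.le, integral_Ioc_eq_integral_Ioo]
  -- integrability of I on [0, T]
  have hIint : IntervalIntegrable I volume 0 T := by
    rw [intervalIntegrable_iff_integrableOn_Ioo_of_le hT.le]
    have hint2 : Integrable (fun t => ∫ s, F (t, s)) := by
      rw [hvol] at hFint; exact hFint.integral_prod_left
    rw [hinner] at hint2
    have : IntegrableOn I' (Ioo 0 T) := (integrable_indicator_iff measurableSet_Ioo).1 hint2
    exact this.congr_fun hII' measurableSet_Ioo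
  -- interval-integrability of the boundary terms
  have hbode : ∀ (u : ℝ → ℝ), ContinuousOn u (Icc 0 T) →
      IntervalIntegrable (fun t => (ψ (pt2 t (u t)))^2) volume 0 T := by
    intro u hu
    apply ContinuousOn.intervalIntegrable
    rw [uIcc_of_le hT.le]
    have : (fun t => (ψ (pt2 t (u t)))^2) = fun t => (ψ (t • e0 + u t • e1))^2 := by
      funext t; rw [hpt]
    rw [this]
    exact (hψc.comp_continuousOn
      ((continuousOn_id.smul continuousOn_const).add (hu.smul continuousOn_const))).pow 2
  have hAci := hbode g hg
  have hBci := hbode G hG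
  -- final assembly
  have hmain : (∫ t in (0:ℝ)..T, (ψ (pt2 t (g t)))^2)
      ≤ ∫ t in (0:ℝ)..T, (2 * (ψ (pt2 t (G t)))^2 + 2 * γ * I t) := by
    refine intervalIntegral.integral_mono_on hT.le hAci ?_ hpoint
    exact (hBci.const_mul 2).add (hIint.const_mul (2 * γ))
  have hsplit : (∫ t in (0:ℝ)..T, (2 * (ψ (pt2 t (G t)))^2 + 2 * γ * I t))
      = 2 * (∫ t in (0:ℝ)..T, (ψ (pt2 t (G t)))^2) + 2 * γ * ∫ t in (0:ℝ)..T, I t := by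
    rw [intervalIntegral.integral_add (hBci.const_mul 2) (hIint.const_mul (2 * γ)),
      intervalIntegral.integral_const_mul, intervalIntegral.integral_const_mul]
  have hfub : ∫ t in (0:ℝ)..T, I t = ∫ x in S, h x := by
    rw [hstep1, hstep2, hstep3]
  calc (∫ t in (0:ℝ)..T, (ψ (pt2 t (g t)))^2)
      ≤ ∫ t in (0:ℝ)..T, (2 * (ψ (pt2 t (G t)))^2 + 2 * γ * I t) := hmain
    _ = 2 * (∫ t in (0:ℝ)..T, (ψ (pt2 t (G t)))^2) + 2 * γ * ∫ t in (0:ℝ)..T, I t := hsplit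
    _ = 2 * (∫ t in (0:ℝ)..T, (ψ (pt2 t (G t)))^2) + 2 * γ * ∫ x in S, ‖gradient ψ x‖^2 := by
        rw [hfub]
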